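/- Let ψ : ℝ^m → ℂ be a smooth function such that ψ, the function q ↦ q_j ψ(q), and ∂ψ/∂q_j all lie in L²(ℝ^m), for a fixed index j. Then B(ψ) and B(q_j ψ) are defined and holomorphic on ℂ^m, and for every z ∈ ℂ^m: B(q_j ψ)(z) = (i/2)·( 2ℏ ∂_{z_j} B(ψ)(z) − z_j B(ψ)(z) ), i.e. B∘(multiplication by q_j) = (i/2)(a_j − a_j*)∘B with a_j f = 2ℏ ∂_{z_j} f and a_j* f = z_j f. -/

import Mathlib

open Complex MeasureTheory Real
open scoped ENNReal

noncomputable section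

/-- The Bargmann kernel `exp(−(1/(4ℏ))(4i q·z + 2|q|² − z·z))`. -/
def bKer (m : ℕ) (h : ℝ) (q : Fin m → ℝ) (z : Fin m → ℂ) : ℂ :=
  Complex.exp (-(1 / (4 * (h : ℂ))) *
    (4 * Complex.I * (∑ j, (q j : ℂ) * z j) + 2 * (∑ j, ((q j : ℂ))^2) - ∑ j, (z j)^2))

/-- The Bargmann transform `B(ψ)(z) = (πℏ)^{-m/4} ∫ ψ(q) exp(−(1/(4ℏ))(4i q·z + 2|q|² − z·z)) dq`. -/
def barg (m : ℕ) (h : ℝ) (ψ : (Fin m → ℝ) → ℂ) (z : Fin m → ℂ) : ℂ :=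
  (((Real.pi * h) ^ (-(m : ℝ) / 4) : ℝ) : ℂ) * ∫ q : Fin m → ℝ, ψ q * bKer m h q z

/-- A function on `ℂ^m` is holomorphic if it is complex-differentiable in each variable. -/
def HoloEach {m : ℕ} (f : (Fin m → ℂ) → ℂ) : Prop :=
  ∀ (z : Fin m → ℂ) (j : Fin m),
    DifferentiableAt ℂ (fun w : ℂ => f (Function.update z j w)) (z j)

/-- The complex partial derivative `∂_{z_j} f` at `z`. -/
def cpder {m : ℕ} (j : Fin m) (f : (Fin m → ℂ) → ℂ) (z : Fin m → ℂ) : ℂ :=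
  deriv (fun w : ℂ => f (Function.update z j w)) (z j)

lemma gauss_int (m : ℕ) {c : ℝ} (hc : 0 < c) :
    Integrable (fun q : Fin m → ℝ => rexp (-c * ∑ i, (q i)^2)) := by
  have H := GaussianFourier.integrable_cexp_neg_mul_sum_add (ι := Fin m) (b := (c : ℂ)) (by simpa using hc)
    (fun _ => 0)
  have := H.re
  refine this.congr (Filter.Eventually.of_forall fun q => ?_)
  have : (-(c:ℂ) * ∑ i, ((q i : ℂ))^2 + ∑ i, (0:ℂ) * (q i : ℂ)) = ((-c * ∑ i, (q i)^2 : ℝ) : ℂ) := by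
    push_cast; simp
  simp only [this, RCLike.re_to_complex, Complex.exp_ofReal_re]

lemma gauss_memL2 (m : ℕ) {c : ℝ} (hc : 0 < c) :
    MemLp (fun q : Fin m → ℝ => rexp (-c * ∑ i, (q i)^2)) 2 volume := by
  rw [memLp_two_iff_integrable_sq]
  · refine (gauss_int m (by linarith : (0:ℝ) < 2*c)).congr
      (Filter.Eventually.of_forall fun q => ?_)
    dsimp only
    rw [sq, ← Real.exp_add]; ring_nf
  · refine Continuous.aestronglyMeasurable ?_
    fun_prop

lemma key_mul_gauss (m : ℕ) {φ : (Fin m → ℝ) → ℝ} (hφ : MemLp φ 2 volume) (C : ℝ) {c : ℝ}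
    (hc : 0 < c) :
    Integrable (fun q : Fin m → ℝ => φ q * (C * rexp (-c * ∑ i, (q i)^2))) := by
  have hG : MemLp (fun q : Fin m → ℝ => C * rexp (-c * ∑ i, (q i)^2)) 2 volume :=
    (gauss_memL2 m hc).const_mul C
  have h12 : (1 : ℝ≥0∞) / 1 = 1 / 2 + 1 / 2 := by
    rw [ENNReal.div_add_div_same]
    rw [show ((1:ℝ≥0∞)+1) = 2 from one_add_one_eq_two, ENNReal.div_self two_ne_zero ENNReal.ofNat_ne_top, div_one]
  have := MemLp.smul (μ := volume) (r := 1) hG hφ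
  rw [← memLp_one_iff_integrable]
  exact this


lemma norm_bKer_eq (m : ℕ) (h : ℝ) (hh : 0 < h) (q : Fin m → ℝ) (z : Fin m → ℂ) :
    ‖bKer m h q z‖ = rexp (-(1/(2*h)) * (∑ i, (q i)^2) + (1/h) * (∑ i, q i * (z i).im)
      + (1/(4*h)) * ((∑ i, (z i).re^2) - ∑ i, (z i).im^2)) := by
  rw [bKer, Complex.norm_exp]
  congr 1
  have e : -(1 / (4 * (h : ℂ))) = ((-(1/(4*h)) : ℝ) : ℂ) := by push_cast; ring
  rw [e, Complex.re_ofReal_mul]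
  simp only [Complex.add_re, Complex.sub_re, Complex.mul_re, Complex.mul_im,
    Complex.re_sum, Complex.im_sum, Complex.I_re, Complex.I_im, Complex.ofReal_re,
    Complex.ofReal_im, Complex.re_ofNat, Complex.im_ofNat, sq]
  field_simp
  simp only [Finset.sum_sub_distrib]
  ring_nf
  simp only [Finset.sum_const_zero]
  ring

lemma norm_bKer_le (m : ℕ) (h : ℝ) (hh : 0 < h) (q : Fin m → ℝ) (z : Fin m → ℂ) :
    ‖bKer m h q z‖ ≤ rexp ((1/(4*h)) * (∑ i, (z i).re^2) + (3/(4*h)) * (∑ i, (z i).im^2))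
      * rexp (-(1/(4*h)) * ∑ i, (q i)^2) := by
  rw [norm_bKer_eq m h hh, ← Real.exp_add, Real.exp_le_exp]
  have hsum : ∑ i, q i * (z i).im ≤ ∑ i, ((q i)^2/4 + (z i).im^2) :=
    Finset.sum_le_sum fun i _ => by nlinarith [sq_nonneg (q i / 2 - (z i).im)]
  rw [Finset.sum_add_distrib, ← Finset.sum_div] at hsum
  set a := ∑ i, (q i)^2
  set b := ∑ i, q i * (z i).im
  set cx := ∑ i, (z i).re^2
  set cy := ∑ i, (z i).im^2
  have e1 : -(1/(2*h)) * a + (1/h) * b + (1/(4*h)) * (cx - cy)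
      = (1/(4*h)) * (-2*a + 4*b + cx - cy) := by field_simp; ring
  have e2 : (1/(4*h)) * cx + (3/(4*h)) * cy + -(1/(4*h)) * a
      = (1/(4*h)) * (cx + 3*cy - a) := by field_simp; ring
  rw [e1, e2]
  have : (0:ℝ) ≤ 1/(4*h) := by positivity
  apply mul_le_mul_of_nonneg_left _ this
  linarith

lemma sum_mul_update (m : ℕ) (q : Fin m → ℝ) (z : Fin m → ℂ) (j : Fin m) (w : ℂ) :
    ∑ k, (q k : ℂ) * Function.update z j w k
      = (q j : ℂ) * w + ∑ k ∈ Finset.univ \ {j}, (q k : ℂ) * z k := by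
  have e : (fun k => (q k : ℂ) * Function.update z j w k)
      = Function.update (fun k => (q k : ℂ) * z k) j ((q j : ℂ) * w) :=
    funext fun k => Function.apply_update (fun k zk => (q k : ℂ) * zk) z j w k
  rw [e, Finset.sum_update_of_mem (Finset.mem_univ j)]

lemma sum_sq_update (m : ℕ) (z : Fin m → ℂ) (j : Fin m) (w : ℂ) :
    ∑ k, (Function.update z j w k)^2 = w^2 + ∑ k ∈ Finset.univ \ {j}, (z k)^2 := by
  have e : (fun k => (Function.update z j w k)^2)
      = Function.update (fun k => (z k)^2) j (w^2) :=
    funext fun k => Function.apply_update (fun _ zk => zk^2) z j w k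
  rw [e, Finset.sum_update_of_mem (Finset.mem_univ j)]

lemma hasDerivAt_bKer (m : ℕ) (h : ℝ) (q : Fin m → ℝ) (z : Fin m → ℂ) (j : Fin m) (w : ℂ) :
    HasDerivAt (fun w : ℂ => bKer m h q (Function.update z j w))
      ((-(1 / (4 * (h:ℂ))) * (4 * Complex.I * (q j : ℂ) - 2 * w))
        * bKer m h q (Function.update z j w)) w := by
  simp only [bKer, sum_mul_update, sum_sq_update]
  set A := ∑ k ∈ Finset.univ \ {j}, (q k : ℂ) * z k
  set B := (2 : ℂ) * ∑ k, ((q k : ℂ))^2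
  set C := ∑ k ∈ Finset.univ \ {j}, (z k)^2
  have h1 : HasDerivAt (fun w : ℂ => (q j : ℂ) * w + A) ((q j : ℂ)) w := by
    simpa using ((hasDerivAt_id w).const_mul ((q j : ℂ))).add_const A
  have h2 : HasDerivAt (fun w : ℂ => w^2 + C) (2 * w) w := by
    simpa using (hasDerivAt_pow 2 w).add_const C
  have h3 : HasDerivAt
      (fun w : ℂ => -(1 / (4 * (h:ℂ))) * (4 * Complex.I * ((q j : ℂ) * w + A) + B - (w^2 + C)))
      (-(1 / (4 * (h:ℂ))) * (4 * Complex.I * (q j : ℂ) - 2 * w)) w := by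
    have := (((h1.const_mul (4 * Complex.I)).add_const B).sub h2).const_mul (-(1 / (4 * (h:ℂ))))
    exact this
  have := h3.cexp
  exact this.congr_deriv (mul_comm _ _)

lemma poly_gauss {h : ℝ} (hh : 0 < h) {R : ℝ} (hR : 0 ≤ R) (t : ℝ) :
    (|t| + R) * rexp (-(1/(8*h)) * t^2) ≤ 1 + 2*h + R := by
  have hu : 0 ≤ t^2/(8*h) := by positivity
  set u := t^2/(8*h) with hu'
  have he : -(1/(8*h)) * t^2 = -u := by rw [hu']; field_simp
  rw [he]
  have h1 : rexp (-u) ≤ 1 := by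
    have := Real.exp_le_exp.mpr (neg_nonpos.mpr hu)
    rwa [Real.exp_zero] at this
  have h2 : u * rexp (-u) ≤ 1 := by
    rw [Real.exp_neg]
    have h3 : u ≤ rexp u := by linarith [Real.add_one_le_exp u]
    have h4 : (0:ℝ) < rexp u := Real.exp_pos u
    calc u * (rexp u)⁻¹ ≤ rexp u * (rexp u)⁻¹ :=
          mul_le_mul_of_nonneg_right h3 (inv_nonneg.mpr h4.le)
      _ = 1 := mul_inv_cancel₀ h4.ne'
  have ht : |t| ≤ u + 2*h := by
    rw [hu', div_add' _ _ _ (by positivity : (8:ℝ)*h ≠ 0), le_div_iff₀ (by positivity)]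
    nlinarith [sq_nonneg (|t| - 4*h), _root_.sq_abs t]
  have hexp : (0:ℝ) ≤ rexp (-u) := (Real.exp_pos _).le
  calc (|t| + R) * rexp (-u) ≤ (u + 2*h + R) * rexp (-u) :=
        mul_le_mul_of_nonneg_right (by linarith) hexp
    _ = u * rexp (-u) + (2*h+R) * rexp (-u) := by ring
    _ ≤ 1 + (2*h+R) * 1 := by
        have := mul_le_mul_of_nonneg_left h1 (by linarith : (0:ℝ) ≤ 2*h+R)
        linarith
    _ = 1 + 2*h + R := by ring

lemma sum_update_le (m : ℕ) (j : Fin m) (g : ℂ → ℝ) (hg : ∀ x, 0 ≤ g x) (z : Fin m → ℂ)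
    (w : ℂ) {R2 : ℝ} (hw : g w ≤ R2) :
    ∑ k, g (Function.update z j w k) ≤ (∑ k, g (z k)) + R2 := by
  have e : (fun k => g (Function.update z j w k))
      = Function.update (fun k => g (z k)) j (g w) :=
    funext fun k => Function.apply_update (fun _ zk => g zk) z j w k
  rw [e, Finset.sum_update_of_mem (Finset.mem_univ j)]
  have h1 : ∑ k ∈ Finset.univ \ {j}, g (z k) ≤ ∑ k, g (z k) :=
    Finset.sum_le_sum_of_subset_of_nonneg (Finset.sdiff_subset) (fun k _ _ => hg (z k))
  linarith

lemma cont_bKer (m : ℕ) (h : ℝ) (z : Fin m → ℂ) :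
    Continuous (fun q : Fin m → ℝ => bKer m h q z) := by
  unfold bKer
  fun_prop

lemma integrable_mul_bKer (m : ℕ) {h : ℝ} (hh : 0 < h) {φ : (Fin m → ℝ) → ℂ}
    (hφ : MemLp φ 2 (volume : Measure (Fin m → ℝ))) (z : Fin m → ℂ) :
    Integrable (fun q : Fin m → ℝ => φ q * bKer m h q z) := by
  refine Integrable.mono'
    (key_mul_gauss m hφ.norm
      (rexp ((1/(4*h)) * (∑ i, (z i).re^2) + (3/(4*h)) * (∑ i, (z i).im^2)))
      (by positivity : (0:ℝ) < 1/(4*h)))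
    (hφ.1.mul (cont_bKer m h z).aestronglyMeasurable)
    (Filter.Eventually.of_forall fun q => ?_)
  rw [norm_mul]
  exact mul_le_mul_of_nonneg_left (norm_bKer_le m h hh q z) (norm_nonneg _)


lemma intDeriv (m : ℕ) {h : ℝ} (hh : 0 < h) {φ : (Fin m → ℝ) → ℂ}
    (hφ : MemLp φ 2 (volume : Measure (Fin m → ℝ))) (z : Fin m → ℂ) (j : Fin m) :
    HasDerivAt (fun w : ℂ => ∫ q : Fin m → ℝ, φ q * bKer m h q (Function.update z j w))
      (∫ q : Fin m → ℝ, φ q * ((-(1 / (4 * (h:ℂ))) * (4 * Complex.I * (q j : ℂ) - 2 * z j))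
          * bKer m h q z)) (z j) := by
  set R : ℝ := ‖z j‖ + 1 with hR
  have hR0 : (0:ℝ) ≤ R := by positivity
  set Cmax : ℝ := (1/(4*h)) * ((∑ i, (z i).re^2) + R^2)
      + (3/(4*h)) * ((∑ i, (z i).im^2) + R^2) with hCmax
  set Kb : ℝ := (1 + 2*h + R) * (rexp Cmax / h) with hKb
  have base := hasDerivAt_integral_of_dominated_loc_of_deriv_le
    (F := fun (w : ℂ) (q : Fin m → ℝ) => φ q * bKer m h q (Function.update z j w))
    (F' := fun (w : ℂ) (q : Fin m → ℝ) =>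
      φ q * ((-(1 / (4 * (h:ℂ))) * (4 * Complex.I * (q j : ℂ) - 2 * w))
        * bKer m h q (Function.update z j w)))
    (x₀ := z j) (s := Metric.ball (z j) 1)
    (bound := fun q => ‖φ q‖ * (Kb * rexp (-(1/(8*h)) * ∑ i, (q i)^2)))
    (μ := volume) (Metric.ball_mem_nhds _ one_pos)
    (Filter.Eventually.of_forall fun w =>
      hφ.1.mul (cont_bKer m h _).aestronglyMeasurable)
    (integrable_mul_bKer m hh hφ (Function.update z j (z j)))
    (hφ.1.mul (Continuous.aestronglyMeasurable (by unfold bKer; fun_prop)))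
    (Filter.Eventually.of_forall fun q => fun w hw => ?_)
    (key_mul_gauss m hφ.norm Kb (by positivity : (0:ℝ) < 1/(8*h)))
    (Filter.Eventually.of_forall fun q => fun w hw =>
      (hasDerivAt_bKer m h q z j w).const_mul (φ q))
  · simpa only [Function.update_eq_self] using base.2
  · -- the bound
    have hwn : ‖w‖ ≤ R := by
      have h1 := Metric.mem_ball.mp hw
      rw [dist_eq_norm] at h1
      calc ‖w‖ = ‖(w - z j) + z j‖ := by ring_nf
        _ ≤ ‖w - z j‖ + ‖z j‖ := norm_add_le _ _
        _ ≤ R := by rw [hR]; linarith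
    rw [norm_mul]
    refine mul_le_mul_of_nonneg_left ?_ (norm_nonneg _)
    rw [norm_mul]
    have hDnorm : ‖-(1 / (4 * (h:ℂ))) * (4 * Complex.I * (q j : ℂ) - 2 * w)‖
        ≤ (|q j| + R) / h := by
      rw [norm_mul]
      have e1 : ‖-(1 / (4 * (h:ℂ)))‖ = 1/(4*h) := by
        rw [show -(1 / (4 * (h:ℂ))) = ((-(1/(4*h)) : ℝ) : ℂ) by push_cast; ring,
          Complex.norm_real, Real.norm_eq_abs, abs_neg, abs_of_pos (by positivity)]
      rw [e1]
      have e2 : ‖4 * Complex.I * (q j : ℂ) - 2 * w‖ ≤ 4 * |q j| + 2 * ‖w‖ := by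
        calc ‖4 * Complex.I * (q j : ℂ) - 2 * w‖
            ≤ ‖4 * Complex.I * (q j : ℂ)‖ + ‖2 * w‖ := norm_sub_le _ _
          _ = 4 * |q j| + 2 * ‖w‖ := by
              rw [norm_mul, norm_mul, norm_mul]
              simp [Complex.norm_real, Real.norm_eq_abs]
      calc 1/(4*h) * ‖4 * Complex.I * (q j : ℂ) - 2 * w‖
          ≤ 1/(4*h) * (4 * |q j| + 4 * R) := by
            refine mul_le_mul_of_nonneg_left ?_ (by positivity)
            linarith
        _ = (|q j| + R) / h := by field_simp
    have hCle : (1/(4*h)) * (∑ i, (Function.update z j w i).re^2)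
        + (3/(4*h)) * (∑ i, (Function.update z j w i).im^2) ≤ Cmax := by
      have hre : ∑ i, (Function.update z j w i).re^2 ≤ (∑ i, (z i).re^2) + R^2 :=
        sum_update_le m j (fun x => x.re^2) (fun x => sq_nonneg _) z w
          (by
            show w.re^2 ≤ R^2
            have habs : |w.re| ≤ R := le_trans (Complex.abs_re_le_norm w)
              hwn
            exact sq_le_sq' (by linarith [(abs_le.mp habs).1]) (abs_le.mp habs).2)
      have him : ∑ i, (Function.update z j w i).im^2 ≤ (∑ i, (z i).im^2) + R^2 :=
        sum_update_le m j (fun x => x.im^2) (fun x => sq_nonneg _) z w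
          (by
            show w.im^2 ≤ R^2
            have habs : |w.im| ≤ R := le_trans (Complex.abs_im_le_norm w)
              hwn
            exact sq_le_sq' (by linarith [(abs_le.mp habs).1]) (abs_le.mp habs).2)
      rw [hCmax]
      have c1 : (0:ℝ) ≤ 1/(4*h) := by positivity
      have c3 : (0:ℝ) ≤ 3/(4*h) := by positivity
      nlinarith
    have hKnorm : ‖bKer m h q (Function.update z j w)‖
        ≤ rexp Cmax * (rexp (-(1/(8*h)) * (q j)^2) * rexp (-(1/(8*h)) * ∑ i, (q i)^2)) := by
      calc ‖bKer m h q (Function.update z j w)‖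
          ≤ rexp ((1/(4*h)) * (∑ i, (Function.update z j w i).re^2)
              + (3/(4*h)) * (∑ i, (Function.update z j w i).im^2))
            * rexp (-(1/(4*h)) * ∑ i, (q i)^2) := norm_bKer_le m h hh q _
        _ ≤ rexp Cmax * rexp (-(1/(4*h)) * ∑ i, (q i)^2) := by
            refine mul_le_mul_of_nonneg_right (Real.exp_le_exp.mpr hCle) (Real.exp_pos _).le
        _ ≤ rexp Cmax * (rexp (-(1/(8*h)) * (q j)^2) * rexp (-(1/(8*h)) * ∑ i, (q i)^2)) := by
            refine mul_le_mul_of_nonneg_left ?_ (Real.exp_pos _).le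
            rw [← Real.exp_add, Real.exp_le_exp]
            have hsingle : (q j)^2 ≤ ∑ i, (q i)^2 :=
              Finset.single_le_sum (fun i _ => sq_nonneg (q i)) (Finset.mem_univ j)
            have H := mul_le_mul_of_nonneg_left hsingle
              (by positivity : (0:ℝ) ≤ 1/(8*h))
            have e8 : -(1/(4*h)) * ∑ i, (q i)^2
                = -((1/(8*h)) * ∑ i, (q i)^2) + -((1/(8*h)) * ∑ i, (q i)^2) := by
              field_simp; ring
            rw [e8]
            linarith
    calc ‖-(1 / (4 * (h:ℂ))) * (4 * Complex.I * (q j : ℂ) - 2 * w)‖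
          * ‖bKer m h q (Function.update z j w)‖
        ≤ ((|q j| + R) / h)
          * (rexp Cmax * (rexp (-(1/(8*h)) * (q j)^2) * rexp (-(1/(8*h)) * ∑ i, (q i)^2))) :=
          mul_le_mul hDnorm hKnorm (norm_nonneg _) (by positivity)
      _ = ((|q j| + R) * rexp (-(1/(8*h)) * (q j)^2)) * ((rexp Cmax / h)
          * rexp (-(1/(8*h)) * ∑ i, (q i)^2)) := by ring
      _ ≤ (1 + 2*h + R) * ((rexp Cmax / h) * rexp (-(1/(8*h)) * ∑ i, (q i)^2)) := by
          refine mul_le_mul_of_nonneg_right (poly_gauss hh hR0 (q j)) (by positivity)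
      _ = Kb * rexp (-(1/(8*h)) * ∑ i, (q i)^2) := by rw [hKb]; ring



lemma alg_aux {h : ℂ} (hq : h ≠ 0) (c0 J1 J2 zj : ℂ) :
    (Complex.I/2) * (2*h*(c0*((-Complex.I/h)*J2 + (zj/(2*h))*J1)) - zj*(c0*J1)) = c0 * J2 := by
  field_simp
  ring_nf
  rw [Complex.I_sq]
  ring


/-- The Bargmann transform intertwines multiplication by `q_j` with `(i/2)(a_j − a_j*)`,
where `a_j = 2ℏ∂_{z_j}` and `a_j* = z_j·`. -/
theorem statement5 (m : ℕ) (hm : 1 ≤ m) (h : ℝ) (hh : 0 < h) (j : Fin m)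
    (ψ : (Fin m → ℝ) → ℂ) (hψ : ContDiff ℝ (⊤ : ℕ∞) ψ)
    (h1 : MemLp ψ 2 (volume : Measure (Fin m → ℝ)))
    (h2 : MemLp (fun q => (q j : ℂ) * ψ q) 2 (volume : Measure (Fin m → ℝ)))
    (h3 : MemLp (fun q => fderiv ℝ ψ q (Pi.single j 1)) 2 (volume : Measure (Fin m → ℝ))) :
    (∀ z : Fin m → ℂ, Integrable (fun q : Fin m → ℝ => ψ q * bKer m h q z)) ∧
    (∀ z : Fin m → ℂ, Integrable (fun q : Fin m → ℝ => ((q j : ℂ) * ψ q) * bKer m h q z)) ∧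
    HoloEach (barg m h ψ) ∧
    HoloEach (barg m h (fun q => (q j : ℂ) * ψ q)) ∧
    (∀ z : Fin m → ℂ,
      barg m h (fun q => (q j : ℂ) * ψ q) z
        = (Complex.I / 2) *
          (2 * (h : ℂ) * cpder j (barg m h ψ) z - z j * barg m h ψ z)) := by
  have hc : (h : ℂ) ≠ 0 := by exact_mod_cast hh.ne'
  set c0 : ℂ := (((Real.pi * h) ^ (-(m : ℝ) / 4) : ℝ) : ℂ) with hc0
  refine ⟨fun z => integrable_mul_bKer m hh h1 z,
    fun z => integrable_mul_bKer m hh h2 z, ?_, ?_, ?_⟩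
  · intro z k
    have hd := (intDeriv m hh h1 z k).const_mul c0
    simp only [barg]
    exact hd.differentiableAt
  · intro z k
    have hd := (intDeriv m hh h2 z k).const_mul c0
    simp only [barg]
    exact hd.differentiableAt
  · intro z
    have hd := (intDeriv m hh h1 z j).const_mul c0
    have hder : cpder j (barg m h ψ) z
        = c0 * ∫ q : Fin m → ℝ,
            ψ q * ((-(1 / (4 * (h:ℂ))) * (4 * Complex.I * (q j : ℂ) - 2 * z j))
              * bKer m h q z) := by
      unfold cpder
      simp only [barg]
      exact hd.deriv
    rw [hder]
    have hsplit : ∫ q : Fin m → ℝ,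
          ψ q * ((-(1 / (4 * (h:ℂ))) * (4 * Complex.I * (q j : ℂ) - 2 * z j)) * bKer m h q z)
        = ((-Complex.I/(h:ℂ)) * ∫ q : Fin m → ℝ, ((q j : ℂ) * ψ q) * bKer m h q z)
          + ((z j/(2*(h:ℂ))) * ∫ q : Fin m → ℝ, ψ q * bKer m h q z) := by
      rw [← integral_const_mul, ← integral_const_mul,
        ← integral_add (((integrable_mul_bKer m hh h2 z)).const_mul _)
          (((integrable_mul_bKer m hh h1 z)).const_mul _)]
      congr 1
      funext q
      field_simp
      ring
    rw [hsplit]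
    simp only [barg]
    exact (alg_aux hc c0 (∫ q : Fin m → ℝ, ψ q * bKer m h q z)
      (∫ q : Fin m → ℝ, ((q j : ℂ) * ψ q) * bKer m h q z) (z j)).symm
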